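/- Let ℓ > 0, z > 0, and let f : [0, ∞) → ℂ be a continuously differentiable function such that |f(θ)| + |f′(θ)| ≤ C(1 + θ)^M for some constants C, M and all θ ≥ 0. Then z · (d/dz) ∫₀^∞ e^{−ℓθ − z·sinh θ} f(θ) dθ = −∫₀^∞ e^{−z·sinh θ} · (d/dθ)[ e^{−ℓθ} tanh(θ) f(θ) ] dθ, where both integrals converge absolutely. -/

import Mathlib

/-!
Put `φ(θ) = e^{-ℓθ} f(θ)`; the growth bound makes `φ` and `φ'` integrable on `(0, ∞)`.
Differentiating under the integral sign (on a ball around `z` the factor `sinh θ` is absorbed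
by `e^{-(z/2) sinh θ}`), the left side is `-z ∫ sinh θ e^{-z sinh θ} φ(θ) dθ`. Since
`z sinh θ = z cosh θ · tanh θ` and `-z cosh θ e^{-z sinh θ}` is the `θ`-derivative of
`e^{-z sinh θ}`, an integration by parts moves the derivative onto `tanh θ · φ(θ)`; the boundary
terms vanish because `tanh 0 = 0` and `φ(θ) → 0` as `θ → ∞`.
-/

open MeasureTheory Set Filter Topology Real

namespace Real

theorem hasDerivAt_tanh (x : ℝ) : HasDerivAt tanh (cosh x ^ 2)⁻¹ x := by
  have h := (hasDerivAt_sinh x).div (hasDerivAt_cosh x) (cosh_pos x).ne'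
  rw [show (cosh x * cosh x - sinh x * sinh x) / cosh x ^ 2 = (cosh x ^ 2)⁻¹ by
    rw [← sq, ← sq, cosh_sq_sub_sinh_sq, one_div]] at h
  exact h.congr_of_eventuallyEq (.of_forall tanh_eq_sinh_div_cosh)

@[fun_prop]
theorem continuous_tanh : Continuous tanh :=
  continuous_iff_continuousAt.2 fun x => (hasDerivAt_tanh x).continuousAt

theorem cosh_mul_tanh (x : ℝ) : cosh x * tanh x = sinh x := by
  rw [tanh_eq_sinh_div_cosh, mul_div_cancel₀ _ (cosh_pos x).ne']

theorem mul_exp_neg_mul_le_inv {c : ℝ} (hc : 0 < c) (y : ℝ) : y * exp (-(c * y)) ≤ c⁻¹ := by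
  have h := (mul_exp_neg_le_exp_neg_one (c * y)).trans (exp_le_one_iff.2 (by norm_num))
  rw [mul_assoc] at h
  rwa [← one_div, le_div_iff₀' hc]

theorem exp_neg_mul_sinh_le_one {z θ : ℝ} (hz : 0 ≤ z) (hθ : 0 ≤ θ) :
    exp (-(z * sinh θ)) ≤ 1 := by
  rw [exp_le_one_iff, neg_nonpos]
  exact mul_nonneg hz (sinh_nonneg_iff.2 hθ)

end Real

theorem tendsto_one_add_rpow_mul_exp_neg_mul_atTop_nhds_zero (M : ℝ) {a : ℝ} (ha : 0 < a) :
    Tendsto (fun θ : ℝ => (1 + θ) ^ M * exp (-a * θ)) atTop (𝓝 0) := by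
  have h := ((tendsto_rpow_mul_exp_neg_mul_atTop_nhds_zero M a ha).comp
    (tendsto_atTop_add_const_left _ 1 tendsto_id)).const_mul (exp a)
  rw [mul_zero] at h
  refine h.congr fun θ => ?_
  simp only [Function.comp, id]
  rw [mul_left_comm, ← exp_add]
  ring_nf

theorem integrableOn_one_add_rpow_mul_exp_neg_mul (M : ℝ) {a : ℝ} (ha : 0 < a) :
    IntegrableOn (fun θ : ℝ => (1 + θ) ^ M * exp (-a * θ)) (Ioi 0) := by
  refine integrable_of_isBigO_exp_neg (half_pos ha) ?_ ?_
  · refine ContinuousOn.mul ?_ (by fun_prop)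
    exact ContinuousOn.rpow_const (by fun_prop) fun θ hθ =>
      Or.inl (add_pos_of_pos_of_nonneg one_pos hθ).ne'
  · have h := (tendsto_one_add_rpow_mul_exp_neg_mul_atTop_nhds_zero M (half_pos ha)).isBigO_one ℝ
    refine (h.mul (Asymptotics.isBigO_refl (fun θ => exp (-(a / 2) * θ)) atTop)).congr
      (fun θ => ?_) fun θ => one_mul _
    rw [mul_assoc, ← exp_add]
    ring_nf

theorem integrableOn_exp_neg_mul_mul_of_norm_le {ℓ C M : ℝ} (hℓ : 0 < ℓ) {f : ℝ → ℂ}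
    (hf : Continuous f) (hbound : ∀ θ, 0 ≤ θ → ‖f θ‖ ≤ C * (1 + θ) ^ M) :
    IntegrableOn (fun θ => (exp (-ℓ * θ) : ℂ) * f θ) (Ioi 0) := by
  refine ((integrableOn_one_add_rpow_mul_exp_neg_mul M hℓ).const_mul C).mono'
    (by fun_prop : Continuous _).aestronglyMeasurable
    (ae_restrict_of_forall_mem measurableSet_Ioi fun θ hθ => ?_)
  rw [norm_mul, Complex.norm_real, norm_of_nonneg (exp_pos _).le]
  exact (mul_le_mul_of_nonneg_left (hbound θ (le_of_lt hθ)) (exp_pos _).le).trans_eq (by ring)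

section LaplaceTransform

variable {α : Type*} [MeasurableSpace α] {μ : Measure α} {s : α → ℝ} {φ : α → ℂ}

theorem integrable_exp_neg_mul_mul (hs : Measurable s) (hs0 : ∀ᵐ a ∂μ, 0 ≤ s a)
    (hφ : Integrable φ μ) {w : ℝ} (hw : 0 ≤ w) :
    Integrable (fun a => (exp (-(w * s a)) : ℂ) * φ a) μ := by
  refine hφ.bdd_mul (c := 1) (by fun_prop) (hs0.mono fun a ha => ?_)
  rw [Complex.norm_real, norm_of_nonneg (exp_pos _).le, exp_le_one_iff, neg_nonpos]
  positivity

theorem hasDerivAt_integral_exp_neg_mul_mul (hs : Measurable s) (hs0 : ∀ᵐ a ∂μ, 0 ≤ s a)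
    (hφ : Integrable φ μ) {z : ℝ} (hz : 0 < z) :
    Integrable (fun a => ((-s a * exp (-(z * s a)) : ℝ) : ℂ) * φ a) μ ∧
      HasDerivAt (fun w => ∫ a, (exp (-(w * s a)) : ℂ) * φ a ∂μ)
        (∫ a, ((-s a * exp (-(z * s a)) : ℝ) : ℂ) * φ a ∂μ) z := by
  refine hasDerivAt_integral_of_dominated_loc_of_deriv_le
    (F := fun w a => (exp (-(w * s a)) : ℂ) * φ a)
    (F' := fun w a => ((-s a * exp (-(w * s a)) : ℝ) : ℂ) * φ a)
    (bound := fun a => 2 / z * ‖φ a‖) (Metric.ball_mem_nhds z (half_pos hz))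
    (.of_forall fun w => (by fun_prop : Measurable _).aestronglyMeasurable.mul hφ.1)
    (integrable_exp_neg_mul_mul hs hs0 hφ hz.le)
    ((by fun_prop : Measurable _).aestronglyMeasurable.mul hφ.1) ?_ (hφ.norm.const_mul _)
    (.of_forall fun a w _ => ?_)
  · filter_upwards [hs0] with a ha w hw
    have hw : z / 2 ≤ w := by
      rw [Metric.mem_ball, Real.dist_eq, abs_lt] at hw
      linarith
    -- the kernel decays like `e^{-(z/2) s}` on the ball, which absorbs the factor `s`
    have hkernel : s a * exp (-(w * s a)) ≤ 2 / z :=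
      calc s a * exp (-(w * s a)) ≤ s a * exp (-(z / 2 * s a)) := by gcongr
        _ ≤ (z / 2)⁻¹ := mul_exp_neg_mul_le_inv (half_pos hz) _
        _ = 2 / z := by rw [inv_div]
    rw [norm_mul, Complex.norm_real, neg_mul, norm_neg, norm_of_nonneg (by positivity)]
    exact mul_le_mul_of_nonneg_right hkernel (norm_nonneg _)
  · have hexponent : HasDerivAt (fun w => -(w * s a)) (-s a) w := (hasDerivAt_mul_const _).neg
    exact (hexponent.exp.ofReal_comp.mul_const (φ a)).congr_deriv (by push_cast; ring)

end LaplaceTransform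

theorem MeasureTheory.IntegrableOn.ofReal_mul_of_abs_le {s : Set ℝ} (hs : MeasurableSet s)
    {φ : ℝ → ℂ} (hφ : IntegrableOn φ s) {c : ℝ → ℝ} (hc : Continuous c) {K : ℝ}
    (hK : ∀ θ ∈ s, |c θ| ≤ K) :
    IntegrableOn (fun θ => (c θ : ℂ) * φ θ) s :=
  hφ.bdd_mul (by fun_prop) (ae_restrict_of_forall_mem hs fun θ hθ => by
    rw [Complex.norm_real]; exact hK θ hθ)

theorem integrableOn_exp_neg_mul_sinh_mul_deriv_tanh_mul {z : ℝ} (hz : 0 ≤ z) {φ φ' : ℝ → ℂ}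
    (hφ : IntegrableOn φ (Ioi 0)) (hφ' : IntegrableOn φ' (Ioi 0)) :
    IntegrableOn (fun θ => (exp (-(z * sinh θ)) : ℂ) *
      ((((cosh θ ^ 2)⁻¹ : ℝ) : ℂ) * φ θ + (tanh θ : ℂ) * φ' θ)) (Ioi 0) := by
  have hbound {c : ℝ → ℝ} (hc : ∀ θ, |c θ| ≤ 1) :
      ∀ θ ∈ Ioi (0 : ℝ), |exp (-(z * sinh θ)) * c θ| ≤ 1 := fun θ hθ => by
    rw [abs_mul, abs_of_pos (exp_pos _)]
    exact mul_le_one₀ (exp_neg_mul_sinh_le_one hz (le_of_lt hθ)) (abs_nonneg _) (hc θ)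
  have hsech (θ : ℝ) : |(cosh θ ^ 2)⁻¹| ≤ 1 := by
    rw [abs_of_pos (by positivity)]
    exact inv_le_one_of_one_le₀ (one_le_pow₀ (one_le_cosh θ))
  have hsech_int := hφ.ofReal_mul_of_abs_le measurableSet_Ioi
    (by fun_prop (disch := intro; positivity)) (hbound hsech)
  have htanh_int := hφ'.ofReal_mul_of_abs_le measurableSet_Ioi (by fun_prop)
    (hbound fun θ => (abs_tanh_lt_one θ).le)
  refine (hsech_int.add htanh_int).congr_fun (fun θ _ => ?_) measurableSet_Ioi
  rw [Pi.add_apply]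
  push_cast
  ring

theorem integral_exp_neg_mul_sinh_mul_deriv {z : ℝ} (hz : 0 ≤ z) {g g' : ℝ → ℂ}
    (hg : ∀ θ, HasDerivAt g (g' θ) θ) (hg0 : g 0 = 0) (hg_top : Tendsto g atTop (𝓝 0))
    (hug' : IntegrableOn (fun θ => (exp (-(z * sinh θ)) : ℂ) * g' θ) (Ioi 0))
    (hu'g : IntegrableOn (fun θ => ((z * cosh θ * exp (-(z * sinh θ)) : ℝ) : ℂ) * g θ) (Ioi 0)) :
    ∫ θ in Ioi 0, (exp (-(z * sinh θ)) : ℂ) * g' θ =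
      ∫ θ in Ioi 0, ((z * cosh θ * exp (-(z * sinh θ)) : ℝ) : ℂ) * g θ := by
  set u : ℝ → ℂ := fun θ => (exp (-(z * sinh θ)) : ℂ)
  have hu (θ : ℝ) : HasDerivAt u (-((z * cosh θ * exp (-(z * sinh θ)) : ℝ) : ℂ)) θ := by
    have hexponent : HasDerivAt (fun θ => -(z * sinh θ)) (-(z * cosh θ)) θ :=
      ((hasDerivAt_sinh θ).const_mul z).neg
    exact hexponent.exp.ofReal_comp.congr_deriv (by push_cast; ring)
  have h_zero : Tendsto (u * g) (𝓝[>] 0) (𝓝 0) := by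
    have h := ((hu 0).continuousAt.mul (hg 0).continuousAt).tendsto
    rw [Pi.mul_apply, hg0, mul_zero] at h
    exact h.mono_left nhdsWithin_le_nhds
  have h_top : Tendsto (u * g) atTop (𝓝 0) := by
    refine squeeze_zero_norm' ?_ (by simpa only [norm_zero] using hg_top.norm)
    filter_upwards [eventually_ge_atTop 0] with θ hθ
    rw [Pi.mul_apply, norm_mul, Complex.norm_real, norm_of_nonneg (exp_pos _).le]
    exact mul_le_of_le_one_left (norm_nonneg _) (exp_neg_mul_sinh_le_one hz hθ)
  have h := integral_Ioi_mul_deriv_eq_deriv_mul (fun θ _ => hu θ) (fun θ _ => hg θ) hug'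
    (by simpa only [Pi.mul_def, Pi.neg_def, neg_mul] using hu'g.neg) h_zero h_top
  simpa only [neg_mul, integral_neg, sub_zero, zero_sub, neg_neg] using h

theorem mul_deriv_integral_exp_neg_mul_sinh_mul {z : ℝ} (hz : 0 < z) {φ φ' : ℝ → ℂ}
    (hφ : ∀ θ, HasDerivAt φ (φ' θ) θ) (hφ_int : IntegrableOn φ (Ioi 0))
    (hφ'_int : IntegrableOn φ' (Ioi 0)) :
    IntegrableOn (fun θ => (exp (-(z * sinh θ)) : ℂ) * φ θ) (Ioi 0) ∧
    IntegrableOn (fun θ => (exp (-(z * sinh θ)) : ℂ) *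
      deriv (fun θ => (tanh θ : ℂ) * φ θ) θ) (Ioi 0) ∧
    z * deriv (fun w => ∫ θ in Ioi 0, (exp (-(w * sinh θ)) : ℂ) * φ θ) z =
      -∫ θ in Ioi 0, (exp (-(z * sinh θ)) : ℂ) * deriv (fun θ => (tanh θ : ℂ) * φ θ) θ := by
  set g' : ℝ → ℂ := fun θ => (((cosh θ ^ 2)⁻¹ : ℝ) : ℂ) * φ θ + (tanh θ : ℂ) * φ' θ
  have hg (θ : ℝ) : HasDerivAt (fun θ => (tanh θ : ℂ) * φ θ) (g' θ) θ :=
    (hasDerivAt_tanh θ).ofReal_comp.mul (hφ θ)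
  have hg_top : Tendsto (fun θ => (tanh θ : ℂ) * φ θ) atTop (𝓝 0) := by
    refine squeeze_zero_norm (fun θ => ?_) (by simpa only [norm_zero] using
      (tendsto_zero_of_hasDerivAt_of_integrableOn_Ioi (fun θ _ => hφ θ) hφ'_int hφ_int).norm)
    rw [norm_mul, Complex.norm_real]
    exact mul_le_of_le_one_left (norm_nonneg _) (abs_tanh_lt_one θ).le
  have hsinh : ∀ᵐ θ ∂(volume.restrict (Ioi (0 : ℝ))), 0 ≤ sinh θ :=
    ae_restrict_of_forall_mem measurableSet_Ioi fun θ hθ => sinh_nonneg_iff.2 (le_of_lt hθ)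
  obtain ⟨hF'_int, hF'⟩ := hasDerivAt_integral_exp_neg_mul_mul measurable_sinh hsinh hφ_int hz
  have hkernel (θ : ℝ) : ((z * cosh θ * exp (-(z * sinh θ)) : ℝ) : ℂ) * ((tanh θ : ℂ) * φ θ) =
      -z * (((-sinh θ * exp (-(z * sinh θ)) : ℝ) : ℂ) * φ θ) := by
    rw [← cosh_mul_tanh]; push_cast; ring
  have hug' := integrableOn_exp_neg_mul_sinh_mul_deriv_tanh_mul hz.le hφ_int hφ'_int
  rw [funext fun θ => (hg θ).deriv]
  refine ⟨integrable_exp_neg_mul_mul measurable_sinh hsinh hφ_int hz.le, hug', ?_⟩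
  rw [hF'.deriv, integral_exp_neg_mul_sinh_mul_deriv hz.le hg (by simp) hg_top hug'
    ((hF'_int.const_mul _).congr (.of_forall fun θ => (hkernel θ).symm))]
  simp_rw [hkernel]
  rw [integral_const_mul]
  ring

theorem euler_operator_integration_by_parts
    (ℓ z : ℝ) (hℓ : 0 < ℓ) (hz : 0 < z)
    (f : ℝ → ℂ) (hf : ContDiff ℝ 1 f)
    (C M : ℝ) (hgrowth : ∀ θ : ℝ, 0 ≤ θ → ‖f θ‖ + ‖deriv f θ‖ ≤ C * (1 + θ) ^ M) :
    IntegrableOn (fun θ : ℝ => (Real.exp (-ℓ * θ - z * Real.sinh θ) : ℂ) * f θ)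
        (Set.Ioi 0) ∧
    IntegrableOn (fun θ : ℝ => (Real.exp (-(z * Real.sinh θ)) : ℂ) *
        deriv (fun θ' : ℝ => ((Real.exp (-ℓ * θ') * Real.tanh θ' : ℝ) : ℂ) * f θ') θ)
        (Set.Ioi 0) ∧
    z * deriv (fun w : ℝ => ∫ θ in Set.Ioi (0 : ℝ),
          (Real.exp (-ℓ * θ - w * Real.sinh θ) : ℂ) * f θ) z
      = -∫ θ in Set.Ioi (0 : ℝ), (Real.exp (-(z * Real.sinh θ)) : ℂ) *
          deriv (fun θ' : ℝ => ((Real.exp (-ℓ * θ') * Real.tanh θ' : ℝ) : ℂ) * f θ') θ := by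
  set φ : ℝ → ℂ := fun θ => (exp (-ℓ * θ) : ℂ) * f θ
  have hφ (θ : ℝ) : HasDerivAt φ (-ℓ * φ θ + (exp (-ℓ * θ) : ℂ) * deriv f θ) θ := by
    have hexp : HasDerivAt (fun θ => exp (-ℓ * θ)) (-ℓ * exp (-ℓ * θ)) θ :=
      ((hasDerivAt_id θ).const_mul (-ℓ)).exp.congr_deriv (by simp [mul_comm])
    refine (hexp.ofReal_comp.mul ((hf.differentiable one_ne_zero) θ).hasDerivAt).congr_deriv ?_
    simp only [φ, Complex.ofReal_mul, Complex.ofReal_neg]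
    ring
  have hφ_int := integrableOn_exp_neg_mul_mul_of_norm_le hℓ hf.continuous
    fun θ hθ => (le_add_of_nonneg_right (norm_nonneg _)).trans (hgrowth θ hθ)
  have hφ'_int := (hφ_int.const_mul (-ℓ : ℂ)).add <|
    integrableOn_exp_neg_mul_mul_of_norm_le hℓ (hf.continuous_deriv le_rfl)
      fun θ hθ => (le_add_of_nonneg_left (norm_nonneg _)).trans (hgrowth θ hθ)
  have hsplit (w θ : ℝ) :
      (exp (-ℓ * θ - w * sinh θ) : ℂ) * f θ = (exp (-(w * sinh θ)) : ℂ) * φ θ := by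
    simp only [φ]
    rw [← mul_assoc, ← Complex.ofReal_mul, ← exp_add, neg_mul, sub_eq_neg_add, add_comm]
  have hg_eq :
      (fun θ => ((exp (-ℓ * θ) * tanh θ : ℝ) : ℂ) * f θ) = fun θ => (tanh θ : ℂ) * φ θ := by
    funext θ
    simp only [φ, Complex.ofReal_mul]
    ring
  obtain ⟨hint, hint', heq⟩ := mul_deriv_integral_exp_neg_mul_sinh_mul hz hφ hφ_int hφ'_int
  simp_rw [hsplit, hg_eq]
  exact ⟨hint, hint', heq⟩
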